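/- Let F be a field and L, N, L_Z positive integers. Consider five nodes A2, A3, A4, B3, B4, each node v equipped with matrices F_v ∈ F^{N×L} and H_v ∈ F^{N×L_Z} where each H_v has full row rank N. Suppose the correctness condition holds for the pairs {A3,B3}, {A4,B3}, {A4,B4}, and the security condition holds for the pairs {A3,B4}, {A2,B4}, {A2,B3}. Writing α_{vu} = dim(rowspan(H_v) ∩ rowspan(H_u)), one has α_{A2 A3} ≤ 3N − (α_{B3 A4} + α_{A4 B4}) − L. -/

import Mathlib

/-!
Put `W_v = rowSpan H_v`, `K = W_A3 ⊓ W_B3` and `Q = W_A2 ⊓ W_A3 ⊓ (W_B3 ⊓ W_B4)`. Lifting a basis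
of `K` through `H_A3` and `H_B3` and applying the correctness of `{A3, B3}` gives a linear map
`K → F^L` of rank `L`, sending `p H_A3 = q H_B3` to `p F_A3 - q F_B3`. Along the path
`A3 – B4 – A2 – B3` of secure pairs this difference vanishes on `Q`, so `L + dim Q ≤ dim K`.
The bound follows by comparing `dim Q` and `dim K` through the modular law
`dim A + dim B = dim (A ⊔ B) + dim (A ⊓ B)`, using that every `W_v` has dimension at most `N`.
-/

open Matrix

/-- The row space of a matrix: the span of its rows in `Fin LZ → F`. -/
noncomputable def rowSpan {F : Type} [Field F] {N LZ : ℕ}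
    (H : Matrix (Fin N) (Fin LZ) F) : Submodule F (Fin LZ → F) :=
  Submodule.span F (Set.range H)

/-- Linear correctness condition for a (qualified) pair of nodes. -/
def CorrectPair (F : Type) [Field F] (L N LZ : ℕ)
    (Fv Fu : Matrix (Fin N) (Fin L) F) (Hv Hu : Matrix (Fin N) (Fin LZ) F) : Prop :=
  ∀ (k : ℕ) (Pv Pu : Matrix (Fin k) (Fin N) F),
    Pv * Hv = Pu * Hu →
    Pv.rank = Module.finrank F ↥(rowSpan Hv ⊓ rowSpan Hu) →
    Pu.rank = Module.finrank F ↥(rowSpan Hv ⊓ rowSpan Hu) →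
    (Pv * Fv - Pu * Fu).rank = L

/-- Linear security condition for an (unqualified) pair of nodes. -/
def SecurePair (F : Type) [Field F] (L N LZ : ℕ)
    (Fv Fu : Matrix (Fin N) (Fin L) F) (Hv Hu : Matrix (Fin N) (Fin LZ) F) : Prop :=
  ∀ (k : ℕ) (Pv Pu : Matrix (Fin k) (Fin N) F),
    Pv * Hv = Pu * Hu → Pv * Fv = Pu * Fu

open Module

theorem Submodule.finrank_add_finrank_le_of_sup_le {K V : Type*} [DivisionRing K]
    [AddCommGroup V] [Module K V] [FiniteDimensional K V] {A B C : Submodule K V}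
    (h : A ⊔ B ≤ C) : finrank K A + finrank K B ≤ finrank K C + finrank K ↥(A ⊓ B) := by
  rw [← Submodule.finrank_sup_add_finrank_inf_eq]
  exact Nat.add_le_add_right (Submodule.finrank_mono h) _

theorem Submodule.finrank_inf_add_le_three_mul {K V : Type*} [DivisionRing K]
    [AddCommGroup V] [Module K V] [FiniteDimensional K V] (W₂ W₃ W₄ U₃ U₄ : Submodule K V)
    {N : ℕ} (hW₃ : finrank K W₃ ≤ N) (hW₄ : finrank K W₄ ≤ N) (hU₃ : finrank K U₃ ≤ N) :
    finrank K ↥(W₂ ⊓ W₃) + (finrank K ↥(U₃ ⊓ W₄) + finrank K ↥(W₄ ⊓ U₄))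
        + finrank K ↥(W₃ ⊓ U₃)
      ≤ 3 * N + finrank K ↥(W₂ ⊓ W₃ ⊓ (U₃ ⊓ U₄)) := by
  have h₁ := finrank_add_finrank_le_of_sup_le (A := W₂ ⊓ W₃) (B := U₃ ⊓ U₄)
    (sup_le_sup_right inf_le_right _)
  have h₁' := finrank_sup_add_finrank_inf_eq W₃ (U₃ ⊓ U₄)
  have h₂ := finrank_add_finrank_le_of_sup_le (A := W₃ ⊓ U₃) (B := U₃ ⊓ W₄ ⊓ (W₄ ⊓ U₄))
    (sup_le inf_le_right (inf_le_left.trans inf_le_left))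
  have h₂' : finrank K ↥(W₃ ⊓ U₃ ⊓ (U₃ ⊓ W₄ ⊓ (W₄ ⊓ U₄))) ≤ finrank K ↥(W₃ ⊓ (U₃ ⊓ U₄)) :=
    finrank_mono fun _ hx => by simp_all only [mem_inf, and_self]
  have h₃ := finrank_add_finrank_le_of_sup_le (A := U₃ ⊓ W₄) (B := W₄ ⊓ U₄)
    (sup_le inf_le_right inf_le_left)
  omega

section

variable {F : Type} [Field F] {L N LZ : ℕ}

theorem rowSpan_eq_range_vecMulLinear (H : Matrix (Fin N) (Fin LZ) F) :
    rowSpan H = LinearMap.range H.vecMulLinear :=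
  (range_vecMulLinear H).symm

theorem mem_rowSpan_iff {H : Matrix (Fin N) (Fin LZ) F} {x : Fin LZ → F} :
    x ∈ rowSpan H ↔ ∃ p, p ᵥ* H = x := by
  rw [rowSpan_eq_range_vecMulLinear]; rfl

theorem finrank_rowSpan_le (H : Matrix (Fin N) (Fin LZ) F) : finrank F (rowSpan H) ≤ N :=
  (finrank_range_le_card (R := F) H).trans_eq (Fintype.card_fin N)

theorem SecurePair.vecMul_eq {Fv Fu : Matrix (Fin N) (Fin L) F}
    {Hv Hu : Matrix (Fin N) (Fin LZ) F} (hs : SecurePair F L N LZ Fv Fu Hv Hu)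
    {p q : Fin N → F} (h : p ᵥ* Hv = q ᵥ* Hu) : p ᵥ* Fv = q ᵥ* Fu := by
  have := hs 1 (replicateRow _ p) (replicateRow _ q) (by simp only [← replicateRow_vecMul, h])
  simp only [← replicateRow_vecMul] at this
  exact congrFun this 0

theorem exists_mul_eq_of_forall_mem_rowSpan {k : ℕ} {H : Matrix (Fin N) (Fin LZ) F}
    {B : Matrix (Fin k) (Fin LZ) F} (hB : ∀ i, B i ∈ rowSpan H) :
    ∃ P : Matrix (Fin k) (Fin N) F, P * H = B := by
  choose P hP using fun i => mem_rowSpan_iff.mp (hB i)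
  exact ⟨of P, by ext i j; exact congrFun (hP i) j⟩

theorem rank_eq_of_linearIndependent_mul {k : ℕ} {P : Matrix (Fin k) (Fin N) F}
    {H : Matrix (Fin N) (Fin LZ) F} (hP : LinearIndependent F (P * H)) : P.rank = k := by
  refine le_antisymm (rank_le_height P) ?_
  calc k = (P * H).rank := by
        rw [rank_eq_finrank_span_row]
        exact ((finrank_span_eq_card hP).trans (Fintype.card_fin k)).symm
    _ ≤ P.rank := rank_mul_le_left P H

theorem CorrectPair.add_finrank_le {Fv Fu : Matrix (Fin N) (Fin L) F}
    {Hv Hu : Matrix (Fin N) (Fin LZ) F} (hc : CorrectPair F L N LZ Fv Fu Hv Hu)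
    {Q : Submodule F (Fin LZ → F)} (hQ : Q ≤ rowSpan Hv ⊓ rowSpan Hu)
    (hagree : ∀ p q : Fin N → F, p ᵥ* Hv = q ᵥ* Hu → p ᵥ* Hv ∈ Q → p ᵥ* Fv = q ᵥ* Fu) :
    L + finrank F Q ≤ finrank F ↥(rowSpan Hv ⊓ rowSpan Hu) := by
  set K := rowSpan Hv ⊓ rowSpan Hu
  let b := finBasis F K
  let B : Matrix (Fin (finrank F K)) (Fin LZ) F := of fun i => (b i : Fin LZ → F)
  have hB : LinearIndependent F B := b.linearIndependent.map' K.subtype K.ker_subtype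
  obtain ⟨Pv, hPv⟩ := exists_mul_eq_of_forall_mem_rowSpan (H := Hv) (B := B) fun i => (b i).2.1
  obtain ⟨Pu, hPu⟩ := exists_mul_eq_of_forall_mem_rowSpan (H := Hu) (B := B) fun i => (b i).2.2
  have hD := hc _ Pv Pu (hPv.trans hPu.symm) (rank_eq_of_linearIndependent_mul (hPv ▸ hB))
    (rank_eq_of_linearIndependent_mul (hPu ▸ hB))
  let ψ : K →ₗ[F] Fin L → F := (Pv * Fv - Pu * Fu).vecMulLinear ∘ₗ b.equivFun.toLinearMap
  have hrange : finrank F (LinearMap.range ψ) = L := by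
    rw [LinearMap.range_comp_of_range_eq_top _ b.equivFun.range, range_vecMulLinear,
      ← rank_eq_finrank_span_row, hD]
  have hker : Q.comap K.subtype ≤ LinearMap.ker ψ := by
    intro x hx
    set c := b.equivFun x
    have hcB : c ᵥ* B = x := by
      have hsum := congrArg K.subtype (b.sum_equivFun x)
      simp only [map_sum, map_smul, Submodule.subtype_apply] at hsum
      rw [vecMul_eq_sum]
      exact hsum
    have := hagree (c ᵥ* Pv) (c ᵥ* Pu) (by rw [vecMul_vecMul, vecMul_vecMul, hPv, hPu])
      (by rwa [vecMul_vecMul, hPv, hcB])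
    change c ᵥ* (Pv * Fv - Pu * Fu) = 0
    rw [vecMul_sub, ← vecMul_vecMul, ← vecMul_vecMul, this, sub_self]
  calc L + finrank F Q
      = finrank F (LinearMap.range ψ) + finrank F (Q.comap K.subtype) := by
        rw [hrange, (Submodule.comapSubtypeEquivOfLe hQ).finrank_eq]
    _ ≤ finrank F (LinearMap.range ψ) + finrank F (LinearMap.ker ψ) :=
        Nat.add_le_add_left (Submodule.finrank_mono hker) _
    _ = finrank F K := LinearMap.finrank_range_add_finrank_ker ψ

theorem vecMul_eq_of_securePair_path {F₁ F₂ F₃ F₄ : Matrix (Fin N) (Fin L) F}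
    {H₁ H₂ H₃ H₄ : Matrix (Fin N) (Fin LZ) F}
    (h₁₂ : SecurePair F L N LZ F₁ F₂ H₁ H₂) (h₃₂ : SecurePair F L N LZ F₃ F₂ H₃ H₂)
    (h₃₄ : SecurePair F L N LZ F₃ F₄ H₃ H₄) {p q : Fin N → F} (hpq : p ᵥ* H₁ = q ᵥ* H₄)
    (hp : p ᵥ* H₁ ∈ rowSpan H₂ ⊓ rowSpan H₃) : p ᵥ* F₁ = q ᵥ* F₄ := by
  obtain ⟨r₂, hr₂⟩ := mem_rowSpan_iff.mp hp.1
  obtain ⟨r₃, hr₃⟩ := mem_rowSpan_iff.mp hp.2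
  rw [h₁₂.vecMul_eq hr₂.symm, ← h₃₂.vecMul_eq (hr₃.trans hr₂.symm),
    h₃₄.vecMul_eq (hr₃.trans hpq)]

end

theorem cds_fig3_intermediate_bound_general (F : Type) [Field F]
    (L N LZ : ℕ)
    (FA2 FA3 FB3 FB4 : Matrix (Fin N) (Fin L) F)
    (HA2 HA3 HA4 HB3 HB4 : Matrix (Fin N) (Fin LZ) F)
    (hq1 : CorrectPair F L N LZ FA3 FB3 HA3 HB3)
    (hs1 : SecurePair F L N LZ FA3 FB4 HA3 HB4)
    (hs2 : SecurePair F L N LZ FA2 FB4 HA2 HB4)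
    (hs3 : SecurePair F L N LZ FA2 FB3 HA2 HB3) :
    Module.finrank F ↥(rowSpan HA2 ⊓ rowSpan HA3)
        + (Module.finrank F ↥(rowSpan HB3 ⊓ rowSpan HA4)
            + Module.finrank F ↥(rowSpan HA4 ⊓ rowSpan HB4))
        + L
      ≤ 3 * N := by
  have hA3B3 := hq1.add_finrank_le
    (Q := rowSpan HA2 ⊓ rowSpan HA3 ⊓ (rowSpan HB3 ⊓ rowSpan HB4))
    (inf_le_inf inf_le_right inf_le_left)
    fun p q hpq hp => vecMul_eq_of_securePair_path hs1 hs2 hs3 hpq ⟨hp.2.2, hp.1.1⟩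
  have hcount := Submodule.finrank_inf_add_le_three_mul (rowSpan HA2) (rowSpan HA3)
    (rowSpan HA4) (rowSpan HB3) (rowSpan HB4) (finrank_rowSpan_le HA3)
    (finrank_rowSpan_le HA4) (finrank_rowSpan_le HB3)
  omega

/-- **Intermediate bound (equation (48)) in the converse proof of Theorem 3.**
With qualified edges `{A3,B3}, {A4,B3}, {A4,B4}` and unqualified edges
`{A3,B4}, {A2,B4}, {A2,B3}`, the noise overlap of `A2` and `A3` satisfies
`α_{A2A3} ≤ 3N − (α_{B3A4} + α_{A4B4}) − L`. -/
theorem cds_fig3_intermediate_bound (F : Type) [Field F]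
    (L N LZ : ℕ) (hL : 0 < L) (hN : 0 < N) (hLZ : 0 < LZ)
    (FA2 FA3 FA4 FB3 FB4 : Matrix (Fin N) (Fin L) F)
    (HA2 HA3 HA4 HB3 HB4 : Matrix (Fin N) (Fin LZ) F)
    (hHA2 : HA2.rank = N) (hHA3 : HA3.rank = N) (hHA4 : HA4.rank = N)
    (hHB3 : HB3.rank = N) (hHB4 : HB4.rank = N)
    (hq1 : CorrectPair F L N LZ FA3 FB3 HA3 HB3)
    (hq2 : CorrectPair F L N LZ FA4 FB3 HA4 HB3)
    (hq3 : CorrectPair F L N LZ FA4 FB4 HA4 HB4)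
    (hs1 : SecurePair F L N LZ FA3 FB4 HA3 HB4)
    (hs2 : SecurePair F L N LZ FA2 FB4 HA2 HB4)
    (hs3 : SecurePair F L N LZ FA2 FB3 HA2 HB3) :
    Module.finrank F ↥(rowSpan HA2 ⊓ rowSpan HA3)
        + (Module.finrank F ↥(rowSpan HB3 ⊓ rowSpan HA4)
            + Module.finrank F ↥(rowSpan HA4 ⊓ rowSpan HB4))
        + L
      ≤ 3 * N :=
  cds_fig3_intermediate_bound_general F L N LZ FA2 FA3 FB3 FB4 HA2 HA3 HA4 HB3 HB4 hq1 hs1 hs2 hs3
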